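/- Exponential decay of the lapse in the tortoise coordinate: for the Schwarzschild tortoise coordinate r*(r), there exist constants C₁, C₂ > 0 such that for all r* ≤ 0, C₁ e^{r*/(2M)} ≤ 1 − 2M/r(r*) ≤ C₂ e^{r*/(2M)}. In particular ∫_{−∞}^{x} (1 − 2M/r(r*)) dr* ≤ C·e^{x/(2M)} < ∞ for every x ≤ 0. -/

import Mathlib

/-!
Writing `r* = tortoise M r`, one has the exact identity
`exp (r* / 2M) = (r - 2M) / M * exp ((r - 3M) / 2M)`, while the lapse is `(r - 2M) / r`.
Their ratio is `r * exp ((r - 3M) / 2M) / M`, which lies between `1` and `3` when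
`2M < r ≤ 3M`, i.e. when `r* ≤ 0`. The integral bound follows by comparison with
`∫_{-∞}^x exp (s / 2M) ds = 2M exp (x / 2M)`.
-/

open Real MeasureTheory Set

/-- Normalised so that the photon sphere `ρ = 3M` sits at `r* = 0`. -/
noncomputable def tortoise (M ρ : ℝ) : ℝ :=
  ρ + 2 * M * log ((ρ - 2 * M) / (2 * M)) - 3 * M + 2 * M * log 2

section Tortoise

variable {M ρ : ℝ}

theorem tortoise_three_mul (hM : M ≠ 0) : tortoise M (3 * M) = 0 := by
  have h : (3 * M - 2 * M) / (2 * M) = 2⁻¹ := by field_simp; ring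
  rw [tortoise, h, log_inv]
  ring

theorem strictMonoOn_tortoise (hM : 0 < M) : StrictMonoOn (tortoise M) (Ioi (2 * M)) := by
  intro a ha b hb hab
  have h2M : 0 < 2 * M := by positivity
  have hlog : log ((a - 2 * M) / (2 * M)) < log ((b - 2 * M) / (2 * M)) :=
    log_lt_log (div_pos (sub_pos.2 ha) h2M) (by gcongr)
  have := mul_lt_mul_of_pos_left hlog h2M
  simp only [tortoise]
  linarith

theorem exp_tortoise_div (hM : 0 < M) (hρ : 2 * M < ρ) :
    exp (tortoise M ρ / (2 * M)) = (ρ - 2 * M) / M * exp ((ρ - 3 * M) / (2 * M)) := by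
  have h : tortoise M ρ / (2 * M)
      = (ρ - 3 * M) / (2 * M) + log ((ρ - 2 * M) / (2 * M)) + log 2 := by
    rw [tortoise]; field_simp; ring
  rw [h, exp_add, exp_add, exp_log (div_pos (sub_pos.2 hρ) (by positivity)),
    exp_log two_pos]
  field_simp

theorem one_sub_div_le_exp_tortoise (hM : 0 < M) (hρ : 2 * M < ρ) :
    1 - 2 * M / ρ ≤ exp (tortoise M ρ / (2 * M)) := by
  have hρ0 : 0 < ρ := by linarith
  have hE := add_one_le_exp ((ρ - 3 * M) / (2 * M))
  have hME : M ≤ exp ((ρ - 3 * M) / (2 * M)) * ρ := by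
    have : M ≤ ((ρ - 3 * M) / (2 * M) + 1) * ρ := by
      rw [div_add_one (by positivity), div_mul_eq_mul_div, le_div_iff₀ (by positivity)]
      nlinarith
    exact this.trans (by gcongr)
  rw [exp_tortoise_div hM hρ, one_sub_div hρ0.ne']
  calc (ρ - 2 * M) / ρ = (ρ - 2 * M) / M * (M / ρ) := by field_simp
    _ ≤ (ρ - 2 * M) / M * exp ((ρ - 3 * M) / (2 * M)) := by
      gcongr
      rwa [div_le_iff₀ hρ0]

theorem inv_three_mul_exp_tortoise_le (hM : 0 < M) (hρ : 2 * M < ρ) (hρ3 : ρ ≤ 3 * M) :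
    3⁻¹ * exp (tortoise M ρ / (2 * M)) ≤ 1 - 2 * M / ρ := by
  have hρ0 : 0 < ρ := by linarith
  have hE : exp ((ρ - 3 * M) / (2 * M)) ≤ 1 :=
    exp_le_one_iff.2 (div_nonpos_of_nonpos_of_nonneg (by linarith) (by positivity))
  rw [exp_tortoise_div hM hρ, one_sub_div hρ0.ne']
  calc 3⁻¹ * ((ρ - 2 * M) / M * exp ((ρ - 3 * M) / (2 * M)))
      ≤ 3⁻¹ * ((ρ - 2 * M) / M) := by
        gcongr
        exact mul_le_of_le_one_right (div_nonneg (by linarith) hM.le) hE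
    _ = (ρ - 2 * M) / (3 * M) := by field_simp
    _ ≤ (ρ - 2 * M) / ρ := by gcongr

end Tortoise

theorem integrableOn_Iic_and_setIntegral_le_of_le_exp {f : ℝ → ℝ} {b x : ℝ} (hb : 0 < b)
    (hf : AEStronglyMeasurable f (volume.restrict (Iic x)))
    (hf0 : ∀ s ≤ x, 0 ≤ f s) (hfexp : ∀ s ≤ x, f s ≤ exp (s / b)) :
    IntegrableOn f (Iic x) ∧ ∫ s in Iic x, f s ≤ b * exp (x / b) := by
  have hg : IntegrableOn (fun s => exp (s / b)) (Iic x) := by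
    simpa only [div_eq_inv_mul] using integrableOn_exp_mul_Iic (inv_pos.2 hb) x
  have hf_int : IntegrableOn f (Iic x) :=
    hg.mono' hf <| ae_restrict_of_forall_mem measurableSet_Iic fun s hs => by
      rw [norm_of_nonneg (hf0 s hs)]
      exact hfexp s hs
  refine ⟨hf_int, ?_⟩
  calc ∫ s in Iic x, f s ≤ ∫ s in Iic x, exp (s / b) :=
        setIntegral_mono_on hf_int hg measurableSet_Iic hfexp
    _ = b * exp (x / b) := by
      simp only [div_eq_inv_mul]
      rw [integral_exp_mul_Iic (inv_pos.2 hb)]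
      field_simp

/-- Exponential decay of the lapse in the tortoise coordinate: if `r : ℝ → (2M, ∞)`
is the inverse of the tortoise map `r* = r + 2M log((r−2M)/2M) − 3M + 2M log 2`,
then there are `C₁, C₂ > 0` with
`C₁ e^{r*/(2M)} ≤ 1 − 2M/r(r*) ≤ C₂ e^{r*/(2M)}` for all `r* ≤ 0`; in particular
`∫_{−∞}^{x} (1 − 2M/r(r*)) dr* ≤ C e^{x/(2M)} < ∞` for every `x ≤ 0`. -/
theorem lapse_exponential_decay (M : ℝ) (hM : 0 < M) (r : ℝ → ℝ)
    (hr : ∀ s, 2 * M < r s)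
    (hinv : ∀ s, r s + 2 * M * Real.log ((r s - 2 * M) / (2 * M)) - 3 * M
      + 2 * M * Real.log 2 = s) :
    (∃ C₁ C₂ : ℝ, 0 < C₁ ∧ 0 < C₂ ∧ ∀ s ≤ (0:ℝ),
      C₁ * Real.exp (s / (2 * M)) ≤ 1 - 2 * M / r s ∧
      1 - 2 * M / r s ≤ C₂ * Real.exp (s / (2 * M))) ∧
    (∃ C : ℝ, 0 < C ∧ ∀ x ≤ (0:ℝ),
      IntegrableOn (fun s => 1 - 2 * M / r s) (Set.Iic x) ∧
      (∫ s in Set.Iic x, (1 - 2 * M / r s)) ≤ C * Real.exp (x / (2 * M))) := by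
  have hT : ∀ s, tortoise M (r s) = s := hinv
  have hmono := strictMonoOn_tortoise hM
  have hr_le : ∀ s ≤ 0, r s ≤ 3 * M := fun s hs =>
    (hmono.le_iff_le (hr s) (show 2 * M < 3 * M by linarith)).1
      (by rwa [hT, tortoise_three_mul hM.ne'])
  have hr_mono : Monotone r := fun a b hab =>
    (hmono.le_iff_le (hr a) (hr b)).1 (by rwa [hT, hT])
  have hupper : ∀ s, 1 - 2 * M / r s ≤ exp (s / (2 * M)) := fun s => by
    simpa only [hT] using one_sub_div_le_exp_tortoise hM (hr s)
  have hlower : ∀ s ≤ 0, 3⁻¹ * exp (s / (2 * M)) ≤ 1 - 2 * M / r s := fun s hs => by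
    simpa only [hT] using inv_three_mul_exp_tortoise_le hM (hr s) (hr_le s hs)
  refine ⟨⟨3⁻¹, 1, by norm_num, one_pos, fun s hs => ⟨hlower s hs, by simpa using hupper s⟩⟩,
    2 * M, by positivity, fun x hx => ?_⟩
  have hmeas : Measurable fun s => 1 - 2 * M / r s :=
    (hr_mono.measurable.const_div _).const_sub _
  exact integrableOn_Iic_and_setIntegral_le_of_le_exp (by positivity) hmeas.aestronglyMeasurable
    (fun s hs => (mul_pos (by norm_num) (exp_pos _)).le.trans (hlower s (hs.trans hx)))
    (fun s _ => hupper s)
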